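/- arXiv:2005.07166 — 3 statements merged into one kernel-verified Lean document; each statement's English description precedes it below -/
import Mathlib

section
/- Contact property of the HLLC flux (Lemma 2.6): if ρ_L > 0, ρ_R > 0, p > 0, and U_L = (ρ_L, 0, p/(γ−1)), U_R = (ρ_R, 0, p/(γ−1)), then F^hllc(U_L, U_R) = (0, p, 0). -/
noncomputable section

/-- A 1D state `U = (ρ, m, E)`. -/
abbrev St : Type := ℝ × ℝ × ℝ

/-- The admissible set `G = {(ρ, m, E) : ρ > 0, E − m²/(2ρ) > 0}`. -/
def admG : Set St := {U | 0 < U.1 ∧ 0 < U.2.2 - U.2.1 ^ 2 / (2 * U.1)}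

/-- The velocity `u = m/ρ`. -/
def vel (U : St) : ℝ := U.2.1 / U.1

/-- The pressure `p = (γ−1)(E − m²/(2ρ))`. -/
def press (γ : ℝ) (U : St) : ℝ := (γ - 1) * (U.2.2 - U.2.1 ^ 2 / (2 * U.1))

/-- The sound speed `√(γ p / ρ)`. -/
def sound (γ : ℝ) (U : St) : ℝ := Real.sqrt (γ * press γ U / U.1)

/-- The specific internal energy `e = (E − m²/(2ρ))/ρ`. -/
def specE (U : St) : ℝ := (U.2.2 - U.2.1 ^ 2 / (2 * U.1)) / U.1

/-- The Euler flux `F(U) = (ρu, ρu² + p, (E+p)u)`. -/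
def eulerF (γ : ℝ) (U : St) : St :=
  (U.1 * vel U, U.1 * vel U ^ 2 + press γ U, (U.2.2 + press γ U) * vel U)

/-- `α₋(U) = u − √(γp/ρ)`. -/
def alphaMinus (γ : ℝ) (U : St) : ℝ := vel U - sound γ U

/-- `α₊(U) = u + √(γp/ρ)`. -/
def alphaPlus (γ : ℝ) (U : St) : ℝ := vel U + sound γ U

/-- `α_max(U) = |u| + √(γp/ρ)`. -/
def alphaMax (γ : ℝ) (U : St) : ℝ := |vel U| + sound γ U

/-- Left wave speed `S_L = min(α₋(U_L), α₋(U_R))`. -/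
def SL (γ : ℝ) (UL UR : St) : ℝ := min (alphaMinus γ UL) (alphaMinus γ UR)

/-- Right wave speed `S_R = max(α₊(U_L), α₊(U_R))`. -/
def SR (γ : ℝ) (UL UR : St) : ℝ := max (alphaPlus γ UL) (alphaPlus γ UR)

/-- Middle wave speed `S_*`. -/
def Sstar (γ : ℝ) (UL UR : St) : ℝ :=
  (press γ UR - press γ UL + UL.1 * vel UL * (SL γ UL UR - vel UL)
      - UR.1 * vel UR * (SR γ UL UR - vel UR)) /
    (UL.1 * (SL γ UL UR - vel UL) - UR.1 * (SR γ UL UR - vel UR))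

/-- HLLC intermediate state
`U_{*i} = ρ_i (S_i − u_i)/(S_i − S_*) · (1, S_*, E_i/ρ_i + (S_* − u_i)(S_* + p_i/(ρ_i(S_i − u_i))))`. -/
def Ustar (γ : ℝ) (Si Sst : ℝ) (Ui : St) : St :=
  (Ui.1 * ((Si - vel Ui) / (Si - Sst))) •
    (((1 : ℝ), Sst,
      Ui.2.2 / Ui.1 + (Sst - vel Ui) * (Sst + press γ Ui / (Ui.1 * (Si - vel Ui)))) : St)

/-- Intermediate flux `F_{*i} = F(U_i) + S_i (U_{*i} − U_i)`. -/
def Fstar (γ : ℝ) (Si Sst : ℝ) (Ui : St) : St :=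
  eulerF γ Ui + Si • (Ustar γ Si Sst Ui - Ui)

/-- The HLLC numerical flux. -/
def Fhllc (γ : ℝ) (UL UR : St) : St :=
  if 0 ≤ SL γ UL UR then eulerF γ UL
  else if 0 ≤ Sstar γ UL UR then Fstar γ (SL γ UL UR) (Sstar γ UL UR) UL
  else if 0 ≤ SR γ UL UR then Fstar γ (SR γ UL UR) (Sstar γ UL UR) UR
  else eulerF γ UR

end

/-!
Both states are at rest with the same pressure, so `S_* = 0`, while `S_L < 0` because the sound
speed of `U_L` is positive; hence the HLLC flux is `F_{*L}`. With `S_* = u_L` the intermediate state `U_{*L}` is `U_L` itself, so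
`F_{*L} = F(U_L) = (0, p, 0)`.
-/

lemma vel_atRest (ρ E : ℝ) : vel ((ρ, 0, E) : St) = 0 := by
  simp [vel]

lemma press_atRest {γ : ℝ} (hγ : γ ≠ 1) (ρ p : ℝ) :
    press γ ((ρ, 0, p / (γ - 1)) : St) = p := by
  have : γ - 1 ≠ 0 := sub_ne_zero.mpr hγ
  simp only [press, ne_eq, OfNat.ofNat_ne_zero, not_false_eq_true, zero_pow, zero_div, sub_zero]
  field_simp

lemma sound_pos {γ : ℝ} (hγ : 0 < γ) {U : St} (hρ : 0 < U.1) (hp : 0 < press γ U) :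
    0 < sound γ U :=
  Real.sqrt_pos.mpr (by positivity)

section HLLC

variable (γ : ℝ)

lemma SL_lt_vel_left {UL : St} (hc : 0 < sound γ UL) (UR : St) : SL γ UL UR < vel UL :=
  (min_le_left _ _).trans_lt (sub_lt_self _ hc)

lemma eulerF_of_vel_eq_zero {U : St} (hv : vel U = 0) : eulerF γ U = (0, press γ U, 0) := by
  simp [eulerF, hv]

lemma Sstar_eq_zero_of_rest {UL UR : St} (hvL : vel UL = 0) (hvR : vel UR = 0)
    (hp : press γ UL = press γ UR) : Sstar γ UL UR = 0 := by
  simp [Sstar, hvL, hvR, hp]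

lemma Ustar_of_eq_vel {S Sst : ℝ} {U : St} (hρ : U.1 ≠ 0) (hS : S ≠ vel U) (hSst : Sst = vel U) :
    Ustar γ S Sst U = U := by
  have hS' : S - vel U ≠ 0 := sub_ne_zero.mpr hS
  obtain ⟨ρ, m, E⟩ := U
  simp only [Ustar, hSst, div_self hS', mul_one, sub_self, zero_mul, add_zero, Prod.smul_mk,
    smul_eq_mul]
  ext <;> simp only [vel] at hρ ⊢ <;> field_simp

lemma Fstar_of_eq_vel {S Sst : ℝ} {U : St} (hρ : U.1 ≠ 0) (hS : S ≠ vel U) (hSst : Sst = vel U) :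
    Fstar γ S Sst U = eulerF γ U := by
  rw [Fstar, Ustar_of_eq_vel γ hρ hS hSst, sub_self, smul_zero, add_zero]

end HLLC

theorem hllc_contact_general (γ : ℝ) (hγ : 1 < γ) (ρL ρR p : ℝ)
    (hρL : 0 < ρL) (hp : 0 < p) :
    Fhllc γ (ρL, 0, p / (γ - 1)) (ρR, 0, p / (γ - 1)) = ((0 : ℝ), p, (0 : ℝ)) := by
  set UL : St := (ρL, 0, p / (γ - 1))
  set UR : St := (ρR, 0, p / (γ - 1))
  have hvL : vel UL = 0 := vel_atRest ρL _
  have hpL : press γ UL = p := press_atRest hγ.ne' ρL p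
  have hSL : SL γ UL UR < 0 :=
    hvL ▸ SL_lt_vel_left γ (sound_pos (by linarith) hρL (hpL ▸ hp)) UR
  have hSst : Sstar γ UL UR = 0 :=
    Sstar_eq_zero_of_rest γ hvL (vel_atRest ρR _) (hpL.trans (press_atRest hγ.ne' ρR p).symm)
  rw [Fhllc, if_neg hSL.not_ge, if_pos hSst.ge,
    Fstar_of_eq_vel γ hρL.ne' (hvL ▸ hSL.ne) (hSst.trans hvL.symm), eulerF_of_vel_eq_zero γ hvL, hpL]

/-- Lemma 2.6: contact property of the HLLC flux. -/
theorem hllc_contact (γ : ℝ) (hγ : 1 < γ) (ρL ρR p : ℝ)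
    (hρL : 0 < ρL) (hρR : 0 < ρR) (hp : 0 < p) :
    Fhllc γ (ρL, 0, p / (γ - 1)) (ρR, 0, p / (γ - 1)) = ((0 : ℝ), p, (0 : ℝ)) :=
  hllc_contact_general γ hγ ρL ρR p hρL hp
end

section
/- One-sided HLLC positivity (Lemma 2.8): for any two admissible states U₀, U₁ ∈ G and any λ > 0 satisfying λ · max{α_max(U₀), α_max(U₁)} ≤ 1, one has U₁ − λ(F(U₁) − F^hllc(U₀, U₁)) ∈ G and U₀ − λ(F^hllc(U₀, U₁) − F(U₀)) ∈ G. -/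
theorem mem_admG_iff {U : St} : U ∈ admG ↔ 0 < U.1 ∧ U.2.1 ^ 2 < 2 * U.1 * U.2.2 := by
  refine and_congr_right fun hρ => ?_
  rw [sub_pos, div_lt_iff₀ (by positivity), mul_comm]

def admCone : ConvexCone ℝ St where
  carrier := admG
  smul_mem' c hc U hU := by
    rw [mem_admG_iff] at hU ⊢
    obtain ⟨hρ, hm⟩ := hU
    refine ⟨by simpa using mul_pos hc hρ, ?_⟩
    simp only [Prod.smul_fst, Prod.smul_snd, smul_eq_mul]
    nlinarith [mul_lt_mul_of_pos_left hm (mul_pos hc hc)]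
  add_mem' U hU V hV := by
    rw [mem_admG_iff] at hU hV ⊢
    obtain ⟨hρU, hmU⟩ := hU
    obtain ⟨hρV, hmV⟩ := hV
    refine ⟨by simpa using add_pos hρU hρV, ?_⟩
    simp only [Prod.fst_add, Prod.snd_add]
    nlinarith [sq_nonneg (U.2.1 * V.1 - V.2.1 * U.1), mul_pos hρU hρV,
      mul_lt_mul_of_pos_left hmU hρV, mul_lt_mul_of_pos_left hmV hρU]

theorem convex_admG : Convex ℝ admG := admCone.convex

section RiemannFan

variable {M : Type*} [AddCommGroup M] [Module ℝ M]

/-- The flux at `x/t = 0` of a Riemann fan whose states `W₀, W₁, W₂, W₃` (with fluxes `F₀, …, F₃`)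
are separated by waves of speeds `s₁ ≤ s₂ ≤ s₃`. -/
noncomputable def fanFlux (s₁ s₂ s₃ : ℝ) (F₀ F₁ F₂ F₃ : M) : M :=
  if 0 ≤ s₁ then F₀ else if 0 ≤ s₂ then F₁ else if 0 ≤ s₃ then F₂ else F₃

theorem Convex.smul_add_smul_add_smul_add_smul_mem {S : Set M} (hS : Convex ℝ S)
    {x₀ x₁ x₂ x₃ : M} (h₀ : x₀ ∈ S) (h₁ : x₁ ∈ S) (h₂ : x₂ ∈ S) (h₃ : x₃ ∈ S)
    {a₀ a₁ a₂ a₃ : ℝ} (ha₀ : 0 ≤ a₀) (ha₁ : 0 ≤ a₁) (ha₂ : 0 ≤ a₂) (ha₃ : 0 ≤ a₃)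
    (hsum : a₀ + a₁ + a₂ + a₃ = 1) :
    a₀ • x₀ + a₁ • x₁ + a₂ • x₂ + a₃ • x₃ ∈ S := by
  simpa [Fin.sum_univ_four] using hS.sum_mem (t := Finset.univ) (w := ![a₀, a₁, a₂, a₃])
    (z := ![x₀, x₁, x₂, x₃]) (by simp [Fin.forall_fin_succ, *]) (by simp [Fin.sum_univ_four, hsum])
    (by simp [Fin.forall_fin_succ, *])

variable {S : Set M} {W₀ W₁ W₂ W₃ F₀ F₁ F₂ F₃ : M} {s₁ s₂ s₃ lam : ℝ}

theorem sub_smul_sub_fanFlux_mem (hS : Convex ℝ S)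
    (hW₀ : W₀ ∈ S) (hW₁ : W₁ ∈ S) (hW₂ : W₂ ∈ S) (hW₃ : W₃ ∈ S)
    (hs₁₂ : s₁ ≤ s₂) (hs₂₃ : s₂ ≤ s₃) (hlam : 0 ≤ lam) (hcfl : lam * s₃ ≤ 1)
    (hF₁ : F₁ - F₀ = s₁ • (W₁ - W₀)) (hF₂ : F₂ - F₁ = s₂ • (W₂ - W₁))
    (hF₃ : F₃ - F₂ = s₃ • (W₃ - W₂)) :
    W₃ - lam • (F₃ - fanFlux s₁ s₂ s₃ F₀ F₁ F₂ F₃) ∈ S := by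
  unfold fanFlux
  split_ifs with h₁ h₂ h₃
  · convert hS.smul_add_smul_add_smul_add_smul_mem hW₀ hW₁ hW₂ hW₃ (a₀ := lam * s₁)
      (a₁ := lam * (s₂ - s₁)) (a₂ := lam * (s₃ - s₂)) (a₃ := 1 - lam * s₃) (mul_nonneg hlam h₁)
      (by nlinarith) (by nlinarith) (by linarith) (by ring) using 1
    linear_combination (norm := module) -lam • (hF₁ + hF₂ + hF₃)
  · convert hS.smul_add_smul_add_smul_add_smul_mem hW₀ hW₁ hW₂ hW₃ (a₀ := 0)
      (a₁ := lam * s₂) (a₂ := lam * (s₃ - s₂)) (a₃ := 1 - lam * s₃) le_rfl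
      (mul_nonneg hlam h₂) (by nlinarith) (by linarith) (by ring) using 1
    linear_combination (norm := module) -lam • (hF₂ + hF₃)
  · convert hS.smul_add_smul_add_smul_add_smul_mem hW₀ hW₁ hW₂ hW₃ (a₀ := 0)
      (a₁ := 0) (a₂ := lam * s₃) (a₃ := 1 - lam * s₃) le_rfl le_rfl
      (mul_nonneg hlam h₃) (by linarith) (by ring) using 1
    linear_combination (norm := module) -lam • hF₃
  · simpa using hW₃

theorem sub_smul_fanFlux_sub_mem (hS : Convex ℝ S)
    (hW₀ : W₀ ∈ S) (hW₁ : W₁ ∈ S) (hW₂ : W₂ ∈ S) (hW₃ : W₃ ∈ S)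
    (hs₁₂ : s₁ ≤ s₂) (hs₂₃ : s₂ ≤ s₃) (hlam : 0 ≤ lam) (hcfl : -1 ≤ lam * s₁)
    (hF₁ : F₁ - F₀ = s₁ • (W₁ - W₀)) (hF₂ : F₂ - F₁ = s₂ • (W₂ - W₁))
    (hF₃ : F₃ - F₂ = s₃ • (W₃ - W₂)) :
    W₀ - lam • (fanFlux s₁ s₂ s₃ F₀ F₁ F₂ F₃ - F₀) ∈ S := by
  unfold fanFlux
  split_ifs with h₁ h₂ h₃
  · simpa using hW₀
  · convert hS.smul_add_smul_add_smul_add_smul_mem hW₀ hW₁ hW₂ hW₃ (a₀ := 1 + lam * s₁)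
      (a₁ := lam * -s₁) (a₂ := 0) (a₃ := 0) (by linarith)
      (by nlinarith) le_rfl le_rfl (by ring) using 1
    linear_combination (norm := module) -lam • hF₁
  · convert hS.smul_add_smul_add_smul_add_smul_mem hW₀ hW₁ hW₂ hW₃ (a₀ := 1 + lam * s₁)
      (a₁ := lam * (s₂ - s₁)) (a₂ := lam * -s₂) (a₃ := 0) (by linarith)
      (by nlinarith) (by nlinarith) le_rfl (by ring) using 1
    linear_combination (norm := module) -lam • (hF₁ + hF₂)
  · convert hS.smul_add_smul_add_smul_add_smul_mem hW₀ hW₁ hW₂ hW₃ (a₀ := 1 + lam * s₁)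
      (a₁ := lam * (s₂ - s₁)) (a₂ := lam * (s₃ - s₂)) (a₃ := lam * -s₃) (by linarith)
      (by nlinarith) (by nlinarith) (by nlinarith) (by ring) using 1
    linear_combination (norm := module) -lam • (hF₁ + hF₂ + hF₃)

end RiemannFan

section Euler

variable {γ : ℝ} {U : St}

theorem alphaPlus_le_alphaMax : alphaPlus γ U ≤ alphaMax γ U :=
  add_le_add_left (le_abs_self _) _

theorem neg_alphaMax_le_alphaMinus : -alphaMax γ U ≤ alphaMinus γ U := by
  rw [alphaMax, alphaMinus]
  linarith [neg_abs_le (vel U)]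

theorem press_pos (hγ : 1 < γ) (hU : U ∈ admG) : 0 < press γ U :=
  mul_pos (sub_pos.2 hγ) hU.2

theorem sound_pos_s8 (hγ : 1 < γ) (hU : U ∈ admG) : 0 < sound γ U :=
  Real.sqrt_pos.2 (div_pos (mul_pos (by linarith) (press_pos hγ hU)) hU.1)

theorem density_mul_sound_sq (hγ : 1 < γ) (hU : U ∈ admG) :
    U.1 * sound γ U ^ 2 = γ * press γ U := by
  rw [sound, Real.sq_sqrt (div_pos (mul_pos (by linarith) (press_pos hγ hU)) hU.1).le,
    mul_div_cancel₀ _ hU.1.ne']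

theorem gamma_mul_press_le_mul (hγ : 1 < γ) (hU : U ∈ admG) {a b : ℝ}
    (ha : sound γ U ≤ a) (hb : sound γ U ≤ b) : γ * press γ U ≤ U.1 * (a * b) := by
  have hc := (sound_pos_s8 hγ hU).le
  rw [← density_mul_sound_sq hγ hU, sq]
  exact mul_le_mul_of_nonneg_left (mul_le_mul ha hb hc (hc.trans ha)) hU.1.le

end Euler

section Ustar

variable {γ S s : ℝ} {U : St}

theorem press_eq_mul_specE (hρ : U.1 ≠ 0) : press γ U = (γ - 1) * U.1 * specE U := by
  rw [press, specE]; field_simp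

theorem Ustar_mem_admG (hγ : 1 < γ) (hU : U ∈ admG)
    (hS : sound γ U ≤ |S - vel U|) (hsgn : 0 < (S - vel U) * (S - s)) :
    Ustar γ S s U ∈ admG := by
  have he : 0 < specE U := div_pos hU.2 hU.1
  have ha : S - vel U ≠ 0 := by rintro h; simp [h] at hsgn
  have hcoef : 0 < U.1 * ((S - vel U) / (S - s)) :=
    mul_pos hU.1 (by simpa [div_pos_iff, mul_pos_iff] using hsgn)
  refine admCone.smul_mem hcoef ⟨one_pos, ?_⟩
  -- The star state has specific internal energy `e + (s - u + q)²/2 - q²/2`, and the sonic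
  -- condition `c ≤ |S - u|` gives `q²/2 < e`.
  set q := press γ U / (U.1 * (S - vel U))
  have hsplit : U.2.2 / U.1 + (s - vel U) * (s + q) - s ^ 2 / (2 * 1)
      = (s - vel U + q) ^ 2 / 2 + (specE U - q ^ 2 / 2) := by
    simp only [vel, specE]; ring
  have hq : specE U - q ^ 2 / 2
      = specE U * (2 * (S - vel U) ^ 2 - (γ - 1) ^ 2 * specE U) / (2 * (S - vel U) ^ 2) := by
    simp only [q, press_eq_mul_specE hU.1.ne']
    field_simp [hU.1.ne']
  have hS' : γ * ((γ - 1) * specE U) ≤ (S - vel U) ^ 2 := by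
    have h := gamma_mul_press_le_mul hγ hU hS hS
    rw [press_eq_mul_specE hU.1.ne', abs_mul_abs_self, ← sq] at h
    exact le_of_mul_le_mul_left (by linarith) hU.1
  have : 0 < 2 * (S - vel U) ^ 2 - (γ - 1) ^ 2 * specE U := by
    nlinarith [mul_pos (sub_pos.2 hγ) he]
  show 0 < U.2.2 / U.1 + (s - vel U) * (s + q) - s ^ 2 / (2 * 1)
  rw [hsplit, hq]
  positivity

end Ustar

noncomputable def pStar (γ S s : ℝ) (U : St) : ℝ := press γ U + U.1 * (S - vel U) * (s - vel U)

theorem Fstar_eq_smul_Ustar_add {γ S s : ℝ} {U : St} (hρ : U.1 ≠ 0) (ha : S - vel U ≠ 0)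
    (hb : S - s ≠ 0) :
    Fstar γ S s U = s • Ustar γ S s U + ((0 : ℝ), pStar γ S s U, pStar γ S s U * s) := by
  obtain ⟨ρ, m, E⟩ := U
  have ha' : ρ * S - m ≠ 0 := by
    contrapose! ha
    simp only [vel]
    field_simp
    linarith
  ext <;>
    simp only [Fstar, Ustar, eulerF, pStar, press, vel, Prod.fst_add, Prod.snd_add, Prod.smul_fst,
      Prod.smul_snd, Prod.fst_sub, Prod.snd_sub, smul_eq_mul] <;>
    field_simp <;> ring

section Hllc

variable {γ : ℝ} {UL UR : St}

theorem sound_le_vel_sub_SL_left : sound γ UL ≤ vel UL - SL γ UL UR :=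
  le_sub_comm.2 (min_le_left _ _)

theorem sound_le_vel_sub_SL_right : sound γ UR ≤ vel UR - SL γ UL UR :=
  le_sub_comm.2 (min_le_right _ _)

theorem sound_le_SR_sub_vel_left : sound γ UL ≤ SR γ UL UR - vel UL :=
  le_sub_iff_add_le'.2 (le_max_left _ _)

theorem sound_le_SR_sub_vel_right : sound γ UR ≤ SR γ UL UR - vel UR :=
  le_sub_iff_add_le'.2 (le_max_right _ _)

theorem SR_le_max_alphaMax : SR γ UL UR ≤ max (alphaMax γ UL) (alphaMax γ UR) :=
  max_le_max alphaPlus_le_alphaMax alphaPlus_le_alphaMax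

theorem neg_max_alphaMax_le_SL : -max (alphaMax γ UL) (alphaMax γ UR) ≤ SL γ UL UR :=
  le_min ((neg_le_neg (le_max_left _ _)).trans neg_alphaMax_le_alphaMinus)
    ((neg_le_neg (le_max_right _ _)).trans neg_alphaMax_le_alphaMinus)

theorem Fhllc_eq_fanFlux : Fhllc γ UL UR = fanFlux (SL γ UL UR) (Sstar γ UL UR) (SR γ UL UR)
    (eulerF γ UL) (Fstar γ (SL γ UL UR) (Sstar γ UL UR) UL)
    (Fstar γ (SR γ UL UR) (Sstar γ UL UR) UR) (eulerF γ UR) :=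
  rfl

variable (hγ : 1 < γ) (hL : UL ∈ admG) (hR : UR ∈ admG)
include hγ hL hR

theorem Sstar_denom_neg :
    UL.1 * (SL γ UL UR - vel UL) - UR.1 * (SR γ UL UR - vel UR) < 0 := by
  have hcL := (sound_pos_s8 hγ hL).trans_le (sound_le_vel_sub_SL_left (UR := UR))
  have hcR := (sound_pos_s8 hγ hR).trans_le (sound_le_SR_sub_vel_right (UL := UL))
  nlinarith [mul_pos hL.1 hcL, mul_pos hR.1 hcR]

theorem SL_lt_Sstar : SL γ UL UR < Sstar γ UL UR := by
  rw [Sstar, lt_div_iff_of_neg (Sstar_denom_neg hγ hL hR)]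
  nlinarith [gamma_mul_press_le_mul hγ hR (sound_le_vel_sub_SL_right (UL := UL))
      (sound_le_SR_sub_vel_right (UL := UL)),
    press_pos hγ hL, mul_pos (sub_pos.2 hγ) (press_pos hγ hR),
    mul_nonneg hL.1.le (sq_nonneg (SL γ UL UR - vel UL))]

theorem Sstar_lt_SR : Sstar γ UL UR < SR γ UL UR := by
  rw [Sstar, div_lt_iff_of_neg (Sstar_denom_neg hγ hL hR)]
  nlinarith [gamma_mul_press_le_mul hγ hL (sound_le_vel_sub_SL_left (UR := UR))
      (sound_le_SR_sub_vel_left (UR := UR)),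
    press_pos hγ hR, mul_pos (sub_pos.2 hγ) (press_pos hγ hL),
    mul_nonneg hR.1.le (sq_nonneg (SR γ UL UR - vel UR))]

theorem Ustar_SL_mem_admG : Ustar γ (SL γ UL UR) (Sstar γ UL UR) UL ∈ admG := by
  have hcL := (sound_pos_s8 hγ hL).trans_le (sound_le_vel_sub_SL_left (UR := UR))
  refine Ustar_mem_admG hγ hL ?_
    (mul_pos_of_neg_of_neg (by linarith) (by linarith [SL_lt_Sstar hγ hL hR]))
  rw [abs_sub_comm]
  exact sound_le_vel_sub_SL_left.trans (le_abs_self _)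

theorem Ustar_SR_mem_admG : Ustar γ (SR γ UL UR) (Sstar γ UL UR) UR ∈ admG := by
  have hcR := (sound_pos_s8 hγ hR).trans_le (sound_le_SR_sub_vel_right (UL := UL))
  refine Ustar_mem_admG hγ hR ?_ (mul_pos (by linarith) (by linarith [Sstar_lt_SR hγ hL hR]))
  exact sound_le_SR_sub_vel_right.trans (le_abs_self _)

-- This is the equation defining `S_*`.
theorem pStar_SL_eq_pStar_SR :
    pStar γ (SL γ UL UR) (Sstar γ UL UR) UL = pStar γ (SR γ UL UR) (Sstar γ UL UR) UR := by
  have hD := (Sstar_denom_neg hγ hL hR).ne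
  simp only [pStar, Sstar]
  field_simp
  ring

theorem Fstar_SR_sub_Fstar_SL :
    Fstar γ (SR γ UL UR) (Sstar γ UL UR) UR - Fstar γ (SL γ UL UR) (Sstar γ UL UR) UL =
      Sstar γ UL UR • (Ustar γ (SR γ UL UR) (Sstar γ UL UR) UR -
        Ustar γ (SL γ UL UR) (Sstar γ UL UR) UL) := by
  have hSL := SL_lt_Sstar hγ hL hR
  have hSR := Sstar_lt_SR hγ hL hR
  have hcL := (sound_pos_s8 hγ hL).trans_le (sound_le_vel_sub_SL_left (UR := UR))
  have hcR := (sound_pos_s8 hγ hR).trans_le (sound_le_SR_sub_vel_right (UL := UL))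
  rw [Fstar_eq_smul_Ustar_add hL.1.ne' (by linarith) (sub_ne_zero.2 hSL.ne),
    Fstar_eq_smul_Ustar_add hR.1.ne' (by linarith) (sub_ne_zero.2 hSR.ne'),
    pStar_SL_eq_pStar_SR hγ hL hR]
  module

end Hllc

/-- Lemma 2.8: one-sided HLLC positivity. -/
theorem hllc_one_sided_positivity (γ : ℝ) (hγ : 1 < γ)
    (U₀ U₁ : St) (hU₀ : U₀ ∈ admG) (hU₁ : U₁ ∈ admG)
    (lam : ℝ) (hlam : 0 < lam)
    (hcfl : lam * max (alphaMax γ U₀) (alphaMax γ U₁) ≤ 1) :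
    U₁ - lam • (eulerF γ U₁ - Fhllc γ U₀ U₁) ∈ admG ∧
      U₀ - lam • (Fhllc γ U₀ U₁ - eulerF γ U₀) ∈ admG := by
  have hSL := (SL_lt_Sstar hγ hU₀ hU₁).le
  have hSR := (Sstar_lt_SR hγ hU₀ hU₁).le
  have hcfl_R : lam * SR γ U₀ U₁ ≤ 1 :=
    (mul_le_mul_of_nonneg_left SR_le_max_alphaMax hlam.le).trans hcfl
  have hcfl_L : -1 ≤ lam * SL γ U₀ U₁ := by
    linarith [mul_le_mul_of_nonneg_left (neg_max_alphaMax_le_SL (γ := γ) (UL := U₀) (UR := U₁))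
      hlam.le]
  have hjump_L : Fstar γ (SL γ U₀ U₁) (Sstar γ U₀ U₁) U₀ - eulerF γ U₀ =
      SL γ U₀ U₁ • (Ustar γ (SL γ U₀ U₁) (Sstar γ U₀ U₁) U₀ - U₀) := add_sub_cancel_left _ _
  have hjump_R : eulerF γ U₁ - Fstar γ (SR γ U₀ U₁) (Sstar γ U₀ U₁) U₁ =
      SR γ U₀ U₁ • (U₁ - Ustar γ (SR γ U₀ U₁) (Sstar γ U₀ U₁) U₁) := by
    rw [Fstar]; module
  have hjump_M := Fstar_SR_sub_Fstar_SL hγ hU₀ hU₁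
  have hUstar_L := Ustar_SL_mem_admG hγ hU₀ hU₁
  have hUstar_R := Ustar_SR_mem_admG hγ hU₀ hU₁
  rw [Fhllc_eq_fanFlux]
  exact ⟨sub_smul_sub_fanFlux_mem convex_admG hU₀ hUstar_L hUstar_R hU₁ hSL hSR hlam.le hcfl_R
      hjump_L hjump_M hjump_R,
    sub_smul_fanFlux_sub_mem convex_admG hU₀ hUstar_L hUstar_R hU₁ hSL hSR hlam.le hcfl_L
      hjump_L hjump_M hjump_R⟩
end

section
/- Three-state HLLC positivity (Lemma 2.9): for any three admissible states U_L, U_M, U_R ∈ G and any λ > 0 satisfying λ · max{α_max(U_L), α_max(U_M), α_max(U_R)} ≤ 1/2, one has U_M − λ(F^hllc(U_M, U_R) − F^hllc(U_L, U_M)) ∈ G. -/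
namespace HLLC

lemma mem_admG_iff {U : St} : U ∈ admG ↔ 0 < U.1 ∧ U.2.1 ^ 2 < 2 * U.1 * U.2.2 := by
  refine and_congr_right fun hρ => ?_
  rw [sub_pos, div_lt_iff₀ (by positivity), mul_comm]

lemma add_mem_admG {A B : St} (hA : A ∈ admG) (hB : B ∈ admG) : A + B ∈ admG := by
  obtain ⟨hA₁, hA₂⟩ := mem_admG_iff.1 hA
  obtain ⟨hB₁, hB₂⟩ := mem_admG_iff.1 hB
  refine mem_admG_iff.2 ⟨add_pos hA₁ hB₁, ?_⟩
  show (A.2.1 + B.2.1) ^ 2 < 2 * (A.1 + B.1) * (A.2.2 + B.2.2)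
  nlinarith [sq_nonneg (A.2.1 * B.1 - B.2.1 * A.1), mul_pos hA₁ hB₁,
    mul_lt_mul_of_pos_right hA₂ hB₁, mul_lt_mul_of_pos_right hB₂ hA₁]

lemma smul_mem_admG {c : ℝ} (hc : 0 < c) {A : St} (hA : A ∈ admG) : c • A ∈ admG := by
  obtain ⟨hA₁, hA₂⟩ := mem_admG_iff.1 hA
  refine mem_admG_iff.2 ⟨mul_pos hc hA₁, ?_⟩
  show (c * A.2.1) ^ 2 < 2 * (c * A.1) * (c * A.2.2)
  nlinarith [mul_lt_mul_of_pos_left hA₂ (mul_pos hc hc)]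

lemma convex_admG : Convex ℝ admG :=
  convex_iff_forall_pos.2 fun _ hx _ hy _ _ ha hb _ =>
    add_mem_admG (smul_mem_admG ha hx) (smul_mem_admG hb hy)

lemma sum_smul_mem_admG {ι : Type*} {t : Finset ι} {w : ι → ℝ} {z : ι → St}
    (hw : ∀ i ∈ t, 0 ≤ w i) (hpos : 0 < ∑ i ∈ t, w i) (hz : ∀ i ∈ t, z i ∈ admG) :
    ∑ i ∈ t, w i • z i ∈ admG := by
  have := smul_mem_admG hpos (convex_admG.centerMass_mem hw hpos hz)
  rwa [Finset.centerMass, smul_inv_smul₀ hpos.ne'] at this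

/-- The combination is `(c - a₁) • X₀ + (a₁ - a₂) • X₁ + (a₂ - a₃) • X₂ + a₃ • X₃`,
with nonnegative weights of total `c`. -/
lemma smul_add_wave_jumps_mem_admG {X₀ X₁ X₂ X₃ : St} (h₀ : X₀ ∈ admG) (h₁ : X₁ ∈ admG)
    (h₂ : X₂ ∈ admG) (h₃ : X₃ ∈ admG) {c a₁ a₂ a₃ : ℝ} (hc : 0 < c) (ha₁ : a₁ ≤ c)
    (ha₂ : a₂ ≤ a₁) (ha₃ : a₃ ≤ a₂) (ha₃₀ : 0 ≤ a₃) :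
    c • X₀ + a₁ • (X₁ - X₀) + a₂ • (X₂ - X₁) + a₃ • (X₃ - X₂) ∈ admG := by
  have hsum := sum_smul_mem_admG (t := Finset.univ) (w := ![c - a₁, a₁ - a₂, a₂ - a₃, a₃])
    (z := ![X₀, X₁, X₂, X₃]) (by simp [Fin.forall_fin_succ]; grind)
    (by simp [Fin.sum_univ_four]; linarith) (by simp [Fin.forall_fin_succ, *])
  convert hsum using 1
  simp only [Fin.sum_univ_four, Matrix.cons_val]
  module

section State
variable {γ : ℝ} {U : St}

lemma alphaMax_nonneg : 0 ≤ alphaMax γ U :=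
  add_nonneg (abs_nonneg _) (Real.sqrt_nonneg _)

lemma neg_alphaMax_le_alphaMinus : -alphaMax γ U ≤ alphaMinus γ U := by
  have := neg_abs_le (vel U)
  rw [alphaMax, alphaMinus]
  linarith

lemma alphaPlus_le_alphaMax : alphaPlus γ U ≤ alphaMax γ U := by
  have := le_abs_self (vel U)
  rw [alphaMax, alphaPlus]
  linarith

variable (hU : U ∈ admG)
include hU

lemma specE_pos : 0 < specE U := div_pos hU.2 hU.1

lemma press_eq_mul_specE : press γ U = (γ - 1) * U.1 * specE U := by
  rw [press, specE]
  field_simp [hU.1.ne']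

lemma div_eq_specE_add_vel_sq : U.2.2 / U.1 = specE U + vel U ^ 2 / 2 := by
  rw [specE, vel]
  field_simp [hU.1.ne']
  ring

variable (hγ : 1 < γ)
include hγ

lemma press_pos : 0 < press γ U := mul_pos (sub_pos.2 hγ) hU.2

lemma mul_sound_sq : U.1 * sound γ U ^ 2 = γ * press γ U := by
  have := press_pos hU hγ
  rw [sound, Real.sq_sqrt (by have := hU.1; positivity)]
  field_simp [hU.1.ne']

lemma sound_pos : 0 < sound γ U :=
  Real.sqrt_pos.2 (by have := press_pos hU hγ; have := hU.1; positivity)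

/-- `ρ a b ≥ ρ c² = γ p > p`. -/
lemma press_lt_mul_mul {a b : ℝ} (ha : sound γ U ≤ a) (hb : sound γ U ≤ b) :
    press γ U < U.1 * (a * b) := by
  have hc := sound_pos hU hγ
  have hab := mul_le_mul ha hb hc.le (hc.le.trans ha)
  nlinarith [mul_sound_sq hU hγ, press_pos hU hγ, mul_le_mul_of_nonneg_left hab hU.1.le]

lemma press_sq_lt {S : ℝ} (hS : sound γ U ^ 2 ≤ (S - vel U) ^ 2) :
    press γ U ^ 2 < 2 * specE U * (U.1 * (S - vel U)) ^ 2 := by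
  have hp := press_pos hU hγ
  have he := specE_pos hU
  have hγp : γ * press γ U ≤ U.1 * (S - vel U) ^ 2 := by
    rw [← mul_sound_sq hU hγ]
    exact mul_le_mul_of_nonneg_left hS hU.1.le
  have hpe := press_eq_mul_specE (γ := γ) hU
  nlinarith [mul_le_mul_of_nonneg_left hγp (mul_pos hU.1 he).le, mul_pos (mul_pos hU.1 he) hp]

end State

lemma smul_mk_one_mem_admG {c s h : ℝ} (hc : 0 < c) (hs : s ^ 2 < 2 * h) :
    c • ((1, s, h) : St) ∈ admG :=
  smul_mem_admG hc (mem_admG_iff.2 ⟨one_pos, by simpa using hs⟩)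

/-- With `w = s - u` and `q = p / (ρ (S - u))`, the energy condition of the star state reads
`0 < (w + q)² + (2e - q²)`. -/
lemma Ustar_mem_admG {γ : ℝ} (hγ : 1 < γ) {U : St} (hU : U ∈ admG) {S s : ℝ}
    (hS : sound γ U ^ 2 ≤ (S - vel U) ^ 2) (hpos : 0 < (S - vel U) / (S - s)) :
    Ustar γ S s U ∈ admG := by
  have ha : U.1 * (S - vel U) ≠ 0 :=
    mul_ne_zero hU.1.ne' fun h => hpos.ne' (by rw [h, zero_div])
  have hq : (press γ U / (U.1 * (S - vel U))) ^ 2 < 2 * specE U := by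
    rw [div_pow, div_lt_iff₀ (by positivity)]
    exact press_sq_lt hU hγ hS
  refine smul_mk_one_mem_admG (mul_pos hU.1 hpos) ?_
  rw [div_eq_specE_add_vel_sq hU]
  nlinarith [sq_nonneg (s - vel U + press γ U / (U.1 * (S - vel U)))]

noncomputable def UstarL (γ : ℝ) (UL UR : St) : St := Ustar γ (SL γ UL UR) (Sstar γ UL UR) UL

noncomputable def UstarR (γ : ℝ) (UL UR : St) : St := Ustar γ (SR γ UL UR) (Sstar γ UL UR) UR

noncomputable def starPress (γ : ℝ) (Si Sst : ℝ) (Ui : St) : ℝ :=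
  press γ Ui + Ui.1 * (Si - vel Ui) * (Sst - vel Ui)

lemma Fstar_sub_smul_Ustar {γ Si Sst : ℝ} {Ui : St} (hρ : Ui.1 ≠ 0) (hu : Si - vel Ui ≠ 0)
    (hs : Si - Sst ≠ 0) :
    Fstar γ Si Sst Ui - Sst • Ustar γ Si Sst Ui =
      (0, starPress γ Si Sst Ui, Sst * starPress γ Si Sst Ui) := by
  obtain ⟨ρ, m, E⟩ := Ui
  simp only at hρ
  obtain ⟨u, rfl⟩ : ∃ u, m = ρ * u := ⟨m / ρ, by field_simp⟩
  have hu' : vel (ρ, ρ * u, E) = u := by rw [vel]; field_simp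
  rw [hu'] at hu
  simp only [Fstar, Ustar, eulerF, starPress, hu', Prod.smul_mk, Prod.mk_add_mk, Prod.mk_sub_mk,
    smul_eq_mul, Prod.mk.injEq]
  refine ⟨?_, ?_, ?_⟩ <;> field_simp <;> ring

lemma sound_le_vel_sub_SL_left (γ : ℝ) (UL UR : St) : sound γ UL ≤ vel UL - SL γ UL UR :=
  le_sub_comm.1 (min_le_left _ _)

lemma sound_le_vel_sub_SL_right (γ : ℝ) (UL UR : St) : sound γ UR ≤ vel UR - SL γ UL UR :=
  le_sub_comm.1 (min_le_right _ _)

lemma sound_le_SR_sub_vel_left (γ : ℝ) (UL UR : St) : sound γ UL ≤ SR γ UL UR - vel UL :=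
  le_sub_iff_add_le'.2 (le_max_left _ _)

lemma sound_le_SR_sub_vel_right (γ : ℝ) (UL UR : St) : sound γ UR ≤ SR γ UL UR - vel UR :=
  le_sub_iff_add_le'.2 (le_max_right _ _)

section Fan
variable {γ : ℝ} {UL UR : St}

lemma neg_max_alphaMax_le_SL : -max (alphaMax γ UL) (alphaMax γ UR) ≤ SL γ UL UR :=
  le_min ((neg_le_neg (le_max_left _ _)).trans neg_alphaMax_le_alphaMinus)
    ((neg_le_neg (le_max_right _ _)).trans neg_alphaMax_le_alphaMinus)

lemma SR_le_max_alphaMax : SR γ UL UR ≤ max (alphaMax γ UL) (alphaMax γ UR) :=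
  max_le_max alphaPlus_le_alphaMax alphaPlus_le_alphaMax

variable (hγ : 1 < γ) (hUL : UL ∈ admG) (hUR : UR ∈ admG)
include hγ hUL hUR

lemma Sstar_den_neg : UL.1 * (SL γ UL UR - vel UL) - UR.1 * (SR γ UL UR - vel UR) < 0 := by
  have hL := sound_le_vel_sub_SL_left γ UL UR |>.trans_lt' (sound_pos hUL hγ)
  have hR := sound_le_SR_sub_vel_right γ UL UR |>.trans_lt' (sound_pos hUR hγ)
  nlinarith [mul_pos hUL.1 hL, mul_pos hUR.1 hR]

lemma SL_lt_Sstar : SL γ UL UR < Sstar γ UL UR := by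
  have hL := press_lt_mul_mul hUL hγ (sound_le_vel_sub_SL_left γ UL UR)
    (sound_le_vel_sub_SL_left γ UL UR)
  have hR := press_lt_mul_mul hUR hγ (sound_le_SR_sub_vel_right γ UL UR)
    (sound_le_vel_sub_SL_right γ UL UR)
  rw [Sstar, lt_div_iff_of_neg (Sstar_den_neg hγ hUL hUR)]
  nlinarith [press_pos hUL hγ]

lemma Sstar_lt_SR : Sstar γ UL UR < SR γ UL UR := by
  have hL := press_lt_mul_mul hUL hγ (sound_le_vel_sub_SL_left γ UL UR)
    (sound_le_SR_sub_vel_left γ UL UR)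
  have hR := press_lt_mul_mul hUR hγ (sound_le_SR_sub_vel_right γ UL UR)
    (sound_le_SR_sub_vel_right γ UL UR)
  rw [Sstar, div_lt_iff_of_neg (Sstar_den_neg hγ hUL hUR)]
  nlinarith [press_pos hUR hγ]

/-- `S_*` is exactly the speed for which the two star pressures agree. -/
lemma starPress_left_eq_right :
    starPress γ (SL γ UL UR) (Sstar γ UL UR) UL = starPress γ (SR γ UL UR) (Sstar γ UL UR) UR := by
  have hden := (Sstar_den_neg hγ hUL hUR).ne
  rw [starPress, starPress, Sstar]
  field_simp
  ring

lemma UstarL_mem_admG : UstarL γ UL UR ∈ admG := by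
  have hc := sound_pos hUL hγ
  have hgap := sound_le_vel_sub_SL_left γ UL UR
  refine Ustar_mem_admG hγ hUL (by nlinarith) (div_pos_of_neg_of_neg (by linarith) ?_)
  linarith [SL_lt_Sstar hγ hUL hUR]

lemma UstarR_mem_admG : UstarR γ UL UR ∈ admG := by
  have hc := sound_pos hUR hγ
  have hgap := sound_le_SR_sub_vel_right γ UL UR
  refine Ustar_mem_admG hγ hUR (by nlinarith) (div_pos (by linarith) ?_)
  linarith [Sstar_lt_SR hγ hUL hUR]

lemma eulerF_add_wave_jumps :
    eulerF γ UL + SL γ UL UR • (UstarL γ UL UR - UL)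
      + Sstar γ UL UR • (UstarR γ UL UR - UstarL γ UL UR)
      + SR γ UL UR • (UR - UstarR γ UL UR) = eulerF γ UR := by
  have hL := Fstar_sub_smul_Ustar (γ := γ) (Si := SL γ UL UR) (Sst := Sstar γ UL UR) hUL.1.ne'
    (by linarith [sound_le_vel_sub_SL_left γ UL UR, sound_pos hUL hγ])
    (by linarith [SL_lt_Sstar hγ hUL hUR])
  have hR := Fstar_sub_smul_Ustar (γ := γ) (Si := SR γ UL UR) (Sst := Sstar γ UL UR) hUR.1.ne'
    (by linarith [sound_le_SR_sub_vel_right γ UL UR, sound_pos hUR hγ])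
    (by linarith [Sstar_lt_SR hγ hUL hUR])
  rw [← starPress_left_eq_right hγ hUL hUR, ← hL] at hR
  rw [UstarL, UstarR]
  unfold Fstar at hR
  linear_combination (norm := module) -hR

lemma Fhllc_eq_add_min :
    Fhllc γ UL UR = eulerF γ UL + min (SL γ UL UR) 0 • (UstarL γ UL UR - UL)
      + min (Sstar γ UL UR) 0 • (UstarR γ UL UR - UstarL γ UL UR)
      + min (SR γ UL UR) 0 • (UR - UstarR γ UL UR) := by
  have hcons := eulerF_add_wave_jumps hγ hUL hUR
  have hLS := SL_lt_Sstar hγ hUL hUR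
  have hSR := Sstar_lt_SR hγ hUL hUR
  rw [UstarL, UstarR] at hcons ⊢
  rw [Fhllc]
  split_ifs with h₁ h₂ h₃
  · rw [min_eq_right h₁, min_eq_right (by linarith), min_eq_right (by linarith)]
    module
  · rw [min_eq_left (not_le.1 h₁).le, min_eq_right h₂, min_eq_right (by linarith), Fstar]
    module
  · rw [min_eq_left (not_le.1 h₁).le, min_eq_left (not_le.1 h₂).le, min_eq_right h₃, Fstar]
    linear_combination (norm := module) -hcons
  · rw [min_eq_left (not_le.1 h₁).le, min_eq_left (not_le.1 h₂).le, min_eq_left (not_le.1 h₃).le]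
    linear_combination (norm := module) -hcons

lemma Fhllc_eq_sub_max :
    Fhllc γ UL UR = eulerF γ UR - max (SR γ UL UR) 0 • (UR - UstarR γ UL UR)
      - max (Sstar γ UL UR) 0 • (UstarR γ UL UR - UstarL γ UL UR)
      - max (SL γ UL UR) 0 • (UstarL γ UL UR - UL) := by
  have hmax (x : ℝ) : max x 0 = x - min x 0 := by linarith [min_add_max x 0]
  rw [Fhllc_eq_add_min hγ hUL hUR, ← eulerF_add_wave_jumps hγ hUL hUR, hmax, hmax, hmax]
  module

end Fan

section HalfUpdate
variable {γ : ℝ} {UL UR : St} (hγ : 1 < γ) (hUL : UL ∈ admG) (hUR : UR ∈ admG)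
  {lam : ℝ} (hlam : 0 ≤ lam) (hcfl : lam * max (alphaMax γ UL) (alphaMax γ UR) ≤ 1 / 2)
include hγ hUL hUR hlam hcfl

lemma half_smul_sub_smul_Fhllc_sub_eulerF_mem_admG :
    (1 / 2 : ℝ) • UL - lam • (Fhllc γ UL UR - eulerF γ UL) ∈ admG := by
  have hLS := SL_lt_Sstar hγ hUL hUR
  have hSR := Sstar_lt_SR hγ hUL hUR
  have hα : -max (alphaMax γ UL) (alphaMax γ UR) ≤ min (SL γ UL UR) 0 :=
    le_min neg_max_alphaMax_le_SL (neg_nonpos.2 (alphaMax_nonneg.trans (le_max_left _ _)))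
  have hsplit : (1 / 2 : ℝ) • UL - lam • (Fhllc γ UL UR - eulerF γ UL) =
      (1 / 2 : ℝ) • UL + (lam * -min (SL γ UL UR) 0) • (UstarL γ UL UR - UL)
        + (lam * -min (Sstar γ UL UR) 0) • (UstarR γ UL UR - UstarL γ UL UR)
        + (lam * -min (SR γ UL UR) 0) • (UR - UstarR γ UL UR) := by
    rw [Fhllc_eq_add_min hγ hUL hUR]
    module
  rw [hsplit]
  refine smul_add_wave_jumps_mem_admG hUL (UstarL_mem_admG hγ hUL hUR)
    (UstarR_mem_admG hγ hUL hUR) hUR one_half_pos ?_ ?_ ?_ ?_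
  · nlinarith
  · gcongr
  · gcongr
  · exact mul_nonneg hlam (neg_nonneg.2 (min_le_right _ _))

lemma half_smul_sub_smul_eulerF_sub_Fhllc_mem_admG :
    (1 / 2 : ℝ) • UR - lam • (eulerF γ UR - Fhllc γ UL UR) ∈ admG := by
  have hLS := SL_lt_Sstar hγ hUL hUR
  have hSR := Sstar_lt_SR hγ hUL hUR
  have hα : max (SR γ UL UR) 0 ≤ max (alphaMax γ UL) (alphaMax γ UR) :=
    max_le SR_le_max_alphaMax (alphaMax_nonneg.trans (le_max_left _ _))
  have hsplit : (1 / 2 : ℝ) • UR - lam • (eulerF γ UR - Fhllc γ UL UR) =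
      (1 / 2 : ℝ) • UR + (lam * max (SR γ UL UR) 0) • (UstarR γ UL UR - UR)
        + (lam * max (Sstar γ UL UR) 0) • (UstarL γ UL UR - UstarR γ UL UR)
        + (lam * max (SL γ UL UR) 0) • (UL - UstarL γ UL UR) := by
    rw [Fhllc_eq_sub_max hγ hUL hUR]
    module
  rw [hsplit]
  refine smul_add_wave_jumps_mem_admG hUR (UstarR_mem_admG hγ hUL hUR)
    (UstarL_mem_admG hγ hUL hUR) hUL one_half_pos ?_ ?_ ?_ ?_
  · nlinarith
  · gcongr
  · gcongr
  · exact mul_nonneg hlam (le_max_right _ _)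

end HalfUpdate

end HLLC

open HLLC in
/-- Lemma 2.9: three-state HLLC positivity. -/
theorem hllc_three_state_positivity (γ : ℝ) (hγ : 1 < γ)
    (UL UM UR : St) (hUL : UL ∈ admG) (hUM : UM ∈ admG) (hUR : UR ∈ admG)
    (lam : ℝ) (hlam : 0 < lam)
    (hcfl : lam * max (alphaMax γ UL) (max (alphaMax γ UM) (alphaMax γ UR)) ≤ 1 / 2) :
    UM - lam • (Fhllc γ UM UR - Fhllc γ UL UM) ∈ admG := by
  have hcflL : lam * max (alphaMax γ UL) (alphaMax γ UM) ≤ 1 / 2 :=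
    hcfl.trans' (mul_le_mul_of_nonneg_left (max_le_max le_rfl (le_max_left _ _)) hlam.le)
  have hcflR : lam * max (alphaMax γ UM) (alphaMax γ UR) ≤ 1 / 2 :=
    hcfl.trans' (mul_le_mul_of_nonneg_left (le_max_right _ _) hlam.le)
  have hsplit : UM - lam • (Fhllc γ UM UR - Fhllc γ UL UM) =
      ((1 / 2 : ℝ) • UM - lam • (Fhllc γ UM UR - eulerF γ UM))
        + ((1 / 2 : ℝ) • UM - lam • (eulerF γ UM - Fhllc γ UL UM)) := by
    module
  rw [hsplit]
  exact add_mem_admG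
    (half_smul_sub_smul_Fhllc_sub_eulerF_mem_admG hγ hUM hUR hlam.le hcflR)
    (half_smul_sub_smul_eulerF_sub_Fhllc_mem_admG hγ hUL hUM hlam.le hcflL)
end
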